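/- arXiv:2202.09809 — 4 statements merged into one kernel-verified Lean document; each statement's English description precedes it below -/
import Mathlib

section
/- Let X := {(l,k) ∈ ℕ × ℕ : k < 2^l} and let ℓ²(X) be the Hilbert space of square-summable complex functions on X, with standard orthonormal basis (δ_{(l,k)}). For f ∈ C([0,1], ℂ) let π(f) and ρ(f) be the unique bounded operators on ℓ²(X) satisfying π(f)δ_{(l,k)} = f(k·2^{-l})·δ_{(l,k)} and ρ(f)δ_{(l,k)} = f((k+1)·2^{-l})·δ_{(l,k)} for all (l,k) ∈ X (these exist since the diagonal entries are bounded by the sup-norm of f). Then π and ρ are unital *-homomorphisms from C([0,1], ℂ) to B(ℓ²(X)), and for every f ∈ C([0,1], ℂ) the difference π(f) − ρ(f) is a compact operator on ℓ²(X). -/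
def DyadicX : Type := {p : ℕ × ℕ // p.2 < 2 ^ p.1}

noncomputable instance : DecidableEq DyadicX := fun _ _ => Classical.dec _

/-- The dyadic point `k·2⁻ˡ ∈ [0,1]` associated to `(l,k) ∈ X`. -/
noncomputable def dyadicNodeL (x : DyadicX) : Set.Icc (0 : ℝ) 1 :=
  ⟨(x.1.2 : ℝ) / 2 ^ x.1.1, by
    constructor
    · positivity
    · rw [div_le_one (by positivity)]
      exact_mod_cast (Nat.cast_le.mpr x.2.le).trans_eq (by push_cast; ring)⟩

/-- The dyadic point `(k+1)·2⁻ˡ ∈ [0,1]` associated to `(l,k) ∈ X`. -/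
noncomputable def dyadicNodeR (x : DyadicX) : Set.Icc (0 : ℝ) 1 :=
  ⟨((x.1.2 : ℝ) + 1) / 2 ^ x.1.1, by
    constructor
    · positivity
    · rw [div_le_one (by positivity)]
      have : (x.1.2 + 1 : ℕ) ≤ 2 ^ x.1.1 := x.2
      exact_mod_cast (Nat.cast_le.mpr this).trans_eq (by push_cast; ring)⟩

/-- `ℓ²(X)` for the dyadic index set. -/
noncomputable abbrev l2DyadicX := lp (fun _ : DyadicX => ℂ) 2

/-!
Both representations factor as `C([0,1]) → ℓ^∞(X) → B(ℓ²(X))`: first sample `f` at the left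
(resp. right) endpoints of the dyadic intervals, then multiply pointwise. So `π(f) − ρ(f)` is the
multiplication operator by `(f(k 2⁻ˡ) − f((k+1) 2⁻ˡ))_{(l,k)}`. The two endpoints are `2⁻ˡ` apart
and each level `l` is finite, so by uniform continuity of `f` this symbol tends to `0` along the
cofinite filter. Such a multiplication operator is the norm limit of the finite-rank operators
obtained by truncating the symbol to finite sets, hence compact.
-/

open Filter Topology
open scoped ENNReal lp Uniformity

theorem isCompactOperator_smulRight {𝕜 E F : Type*} [NontriviallyNormedField 𝕜]
    [LocallyCompactSpace 𝕜] [NormedAddCommGroup E] [NormedSpace 𝕜 E] [NormedAddCommGroup F]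
    [NormedSpace 𝕜 F] (φ : E →L[𝕜] 𝕜) (v : F) :
    IsCompactOperator (φ.smulRight v) :=
  (isCompactOperator_of_locallyCompactSpace_dom φ).clm_comp
    (ContinuousLinearMap.toSpanSingleton 𝕜 v)

theorem lp.tendsto_sum_single_infty {ι E : Type*} [NormedAddCommGroup E] [DecidableEq ι]
    {d : ℓ^∞(ι, E)} (hd : Tendsto (⇑d) cofinite (𝓝 0)) :
    Tendsto (fun s : Finset ι => ∑ i ∈ s, lp.single ∞ i (d i)) atTop (𝓝 d) := by
  rw [Metric.tendsto_atTop]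
  intro ε hε
  obtain ⟨S, hS⟩ : ∃ S : Finset ι, ∀ i ∉ S, ‖d i‖ ≤ ε / 2 := by
    have hfin := eventually_cofinite.mp ((tendsto_zero_iff_norm_tendsto_zero.mp hd).eventually
      (ge_mem_nhds (half_pos hε)))
    exact ⟨hfin.toFinset, fun i hi => by simpa using hi⟩
  refine ⟨S, fun s hs => ?_⟩
  rw [dist_eq_norm]
  refine (lp.norm_le_of_forall_le (half_pos hε).le fun i => ?_).trans_lt (half_lt_self hε)
  rw [lp.coeFn_sub, Pi.sub_apply, lp.coeFn_sum, Finset.sum_apply]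
  simp only [lp.single_apply, Pi.single_apply, Finset.sum_ite_eq]
  split_ifs with hi
  · simpa using (half_pos hε).le
  · simpa using hS i fun h => hi (hs h)

theorem Filter.Tendsto.tendsto_sub_comp {T E ι : Type*} [UniformSpace T] [CompactSpace T]
    [AddGroup E] [UniformSpace E] [IsUniformAddGroup E] {l : Filter ι} {x y : ι → T}
    (h : Tendsto (fun i => (x i, y i)) l (𝓤 T)) (f : C(T, E)) :
    Tendsto (fun i => f (y i) - f (x i)) l (𝓝 0) := by
  have := Tendsto.comp (CompactSpace.uniformContinuous_of_continuous f.continuous) h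
  rwa [uniformity_eq_comap_nhds_zero E, tendsto_comap_iff] at this

section MultiplicationOperator

variable {ι 𝕜 : Type*} [RCLike 𝕜]

theorem norm_infty_apply_mul_le (d : ℓ^∞(ι, 𝕜)) (f : ι → 𝕜) (i : ι) :
    ‖d i * f i‖ ≤ ‖d‖ * ‖f i‖ := by
  rw [norm_mul]
  exact mul_le_mul_of_nonneg_right (lp.norm_apply_le_norm ENNReal.top_ne_zero d i) (norm_nonneg _)

theorem memℓp_infty_mul {p : ℝ≥0∞} (d : ℓ^∞(ι, 𝕜)) (f : ℓ^p(ι, 𝕜)) : Memℓp (⇑d * ⇑f) p :=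
  (lp.memℓp (‖d‖ • f)).mono' fun i => by
    simpa [norm_smul] using norm_infty_apply_mul_le d f i

variable (𝕜) (p : ℝ≥0∞) [Fact (1 ≤ p)]

theorem norm_infty_mul_le (d : ℓ^∞(ι, 𝕜)) (f : ℓ^p(ι, 𝕜)) :
    ‖(⟨⇑d * ⇑f, memℓp_infty_mul d f⟩ : ℓ^p(ι, 𝕜))‖ ≤ ‖d‖ * ‖f‖ := calc
  _ ≤ ‖‖d‖ • f‖ := lp.norm_mono (zero_lt_one.trans_le Fact.out).ne' fun i => by
    simpa [norm_smul] using norm_infty_apply_mul_le d f i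
  _ = ‖d‖ * ‖f‖ := by rw [norm_smul, norm_norm]

noncomputable def lpMulCLM (d : ℓ^∞(ι, 𝕜)) : ℓ^p(ι, 𝕜) →L[𝕜] ℓ^p(ι, 𝕜) :=
  LinearMap.mkContinuous
    { toFun f := ⟨⇑d * ⇑f, memℓp_infty_mul d f⟩
      map_add' f g := lp.ext (mul_add (⇑d) f g)
      map_smul' c f := lp.ext (mul_smul_comm c (⇑d) f) }
    ‖d‖ (norm_infty_mul_le 𝕜 p d)

variable {𝕜 p} in
@[simp]
theorem lpMulCLM_apply (d : ℓ^∞(ι, 𝕜)) (f : ℓ^p(ι, 𝕜)) (i : ι) :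
    lpMulCLM 𝕜 p d f i = d i * f i := rfl

noncomputable def lpMulAlgHom : ℓ^∞(ι, 𝕜) →ₐ[𝕜] (ℓ^p(ι, 𝕜) →L[𝕜] ℓ^p(ι, 𝕜)) where
  toFun := lpMulCLM 𝕜 p
  map_one' := by ext f i; simp
  map_mul' d e := by ext f i; simp [mul_assoc]
  map_zero' := by ext f i; simp
  map_add' d e := by ext f i; simp [add_mul]
  commutes' c := by ext f i; simp [Algebra.algebraMap_eq_smul_one]

theorem norm_lpMulAlgHom_le (d : ℓ^∞(ι, 𝕜)) : ‖lpMulAlgHom 𝕜 p d‖ ≤ ‖d‖ :=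
  ContinuousLinearMap.opNorm_le_bound _ (norm_nonneg d) (norm_infty_mul_le 𝕜 p d)

theorem lipschitzWith_lpMulAlgHom : LipschitzWith 1 (lpMulAlgHom 𝕜 p : ℓ^∞(ι, 𝕜) → _) :=
  LipschitzWith.of_dist_le_mul fun d e => by
    simpa [dist_eq_norm, ← map_sub] using norm_lpMulAlgHom_le 𝕜 p (d - e)

theorem lpMulAlgHom_single [DecidableEq ι] (d : ℓ^∞(ι, 𝕜)) (i : ι) (c : 𝕜) :
    lpMulAlgHom 𝕜 p d (lp.single p i c) = d i • lp.single p i c := by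
  ext j
  by_cases h : j = i
  · subst h; simp [lpMulAlgHom]
  · simp [lpMulAlgHom, h]

theorem lpMulAlgHom_single_infty [DecidableEq ι] (i : ι) (c : 𝕜) :
    lpMulAlgHom 𝕜 p (lp.single ∞ i c) =
      (lp.evalCLM 𝕜 (fun _ => 𝕜) p i).smulRight (lp.single p i c) := by
  ext f j
  by_cases h : j = i
  · subst h; simp [lpMulAlgHom, lp.evalCLM, mul_comm]
  · simp [lpMulAlgHom, lp.evalCLM, h]

theorem isCompactOperator_lpMulAlgHom_of_tendsto {d : ℓ^∞(ι, 𝕜)}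
    (hd : Tendsto (⇑d) cofinite (𝓝 0)) : IsCompactOperator (lpMulAlgHom 𝕜 p d) := by
  classical
  refine isCompactOperator_of_tendsto
    (((lipschitzWith_lpMulAlgHom 𝕜 p).continuous.tendsto d).comp (lp.tendsto_sum_single_infty hd))
    (Eventually.of_forall fun s => ?_)
  rw [Function.comp_apply, map_sum]
  refine (compactOperator (RingHom.id 𝕜) ℓ^p(ι, 𝕜) ℓ^p(ι, 𝕜)).sum_mem fun i _ => ?_
  rw [lpMulAlgHom_single_infty]
  exact isCompactOperator_smulRight _ _

theorem lpMulAlgHom_star (d : ℓ^∞(ι, 𝕜)) :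
    lpMulAlgHom 𝕜 2 (star d) = star (lpMulAlgHom 𝕜 2 d) := by
  rw [ContinuousLinearMap.star_eq_adjoint, ContinuousLinearMap.eq_adjoint_iff]
  intro f g
  simp only [lp.inner_eq_tsum]
  refine tsum_congr fun i => ?_
  simp [lpMulAlgHom, RCLike.inner_apply]
  ring

noncomputable def l2MulStarAlgHom : ℓ^∞(ι, 𝕜) →⋆ₐ[𝕜] (ℓ²(ι, 𝕜) →L[𝕜] ℓ²(ι, 𝕜)) :=
  { lpMulAlgHom 𝕜 2 with map_star' := lpMulAlgHom_star 𝕜 }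

end MultiplicationOperator

noncomputable def evalLpInftyStarAlgHom {T ι 𝕜 : Type*} [TopologicalSpace T] [CompactSpace T]
    [RCLike 𝕜] (x : ι → T) : C(T, 𝕜) →⋆ₐ[𝕜] ℓ^∞(ι, 𝕜) where
  toFun f := ⟨f ∘ x, memℓp_infty ⟨‖f‖, by rintro - ⟨i, rfl⟩; exact f.norm_coe_le_norm (x i)⟩⟩
  map_one' := rfl
  map_mul' _ _ := rfl
  map_zero' := rfl
  map_add' _ _ := rfl
  commutes' _ := rfl
  map_star' _ := rfl

theorem dist_dyadicNodeR_dyadicNodeL (x : DyadicX) :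
    dist (dyadicNodeR x) (dyadicNodeL x) = (2 ^ x.1.1)⁻¹ := by
  rw [Subtype.dist_eq, Real.dist_eq, dyadicNodeR, dyadicNodeL, ← sub_div, add_sub_cancel_left,
    abs_of_pos (by positivity), one_div]

theorem finite_setOf_dyadicX_level (l : ℕ) : {x : DyadicX | x.1.1 = l}.Finite :=
  (((Set.finite_singleton l).prod (Set.finite_Iio (2 ^ l))).preimage
    Subtype.val_injective.injOn).subset fun x hx => ⟨hx, hx ▸ x.2⟩

theorem tendsto_dyadicX_level : Tendsto (fun x : DyadicX => x.1.1) cofinite atTop :=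
  Nat.cofinite_eq_atTop ▸ Tendsto.cofinite_of_finite_preimage_singleton finite_setOf_dyadicX_level

theorem tendsto_dyadicNodes_uniformity :
    Tendsto (fun x => (dyadicNodeR x, dyadicNodeL x)) cofinite (𝓤 (Set.Icc (0 : ℝ) 1)) := by
  rw [Metric.uniformity_eq_comap_nhds_zero, tendsto_comap_iff]
  simpa only [Function.comp_def, dist_dyadicNodeR_dyadicNodeL] using
    (tendsto_inv_atTop_zero.comp (tendsto_pow_atTop_atTop_of_one_lt one_lt_two)).comp
      tendsto_dyadicX_level

/-- **(From the proof of Theorem 1.9.)** The diagonal representations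
`π, ρ : C([0,1],ℂ) → B(ℓ²(X))` determined on the standard basis by
`π(f) δ_{(l,k)} = f(k 2⁻ˡ) δ_{(l,k)}` and `ρ(f) δ_{(l,k)} = f((k+1) 2⁻ˡ) δ_{(l,k)}`
are unital `*`-homomorphisms, and `π(f) − ρ(f)` is compact for every `f`. -/
theorem stmt_2 :
    ∃ (P R : C(Set.Icc (0 : ℝ) 1, ℂ) →⋆ₐ[ℂ] (l2DyadicX →L[ℂ] l2DyadicX)),
      (∀ (f : C(Set.Icc (0 : ℝ) 1, ℂ)) (x : DyadicX),
        P f (lp.single 2 x (1 : ℂ)) = f (dyadicNodeL x) • lp.single 2 x (1 : ℂ)) ∧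
      (∀ (f : C(Set.Icc (0 : ℝ) 1, ℂ)) (x : DyadicX),
        R f (lp.single 2 x (1 : ℂ)) = f (dyadicNodeR x) • lp.single 2 x (1 : ℂ)) ∧
      (∀ f : C(Set.Icc (0 : ℝ) 1, ℂ), IsCompactOperator ⇑(P f - R f)) := by
  refine ⟨(l2MulStarAlgHom ℂ).comp (evalLpInftyStarAlgHom dyadicNodeL),
    (l2MulStarAlgHom ℂ).comp (evalLpInftyStarAlgHom dyadicNodeR),
    fun f x => lpMulAlgHom_single ℂ 2 _ x 1, fun f x => lpMulAlgHom_single ℂ 2 _ x 1,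
    fun f => ?_⟩
  rw [StarAlgHom.comp_apply, StarAlgHom.comp_apply, ← map_sub]
  exact isCompactOperator_lpMulAlgHom_of_tendsto ℂ 2
    (tendsto_dyadicNodes_uniformity.tendsto_sub_comp f)
end

section
/- Let M be a unital C*-algebra and κ : M → M a *-automorphism. Let b₁, b₂ ∈ M, let s ∈ M be an isometry, and let r₁, r₂ ∈ M be isometries with κ(r₁) = r₁, κ(r₂) = r₂ and r₁r₁* + r₂r₂* = 1, such that b₁ commutes with r₁, r₂, r₁* and r₂*. Then the element u := (r₁r₁* + r₂ s r₂*)·s* + r₂(1 − ss*) is a unitary in M, and ‖u·b₂·κ(u)* − (r₁ b₁ r₁* + r₂ b₂ r₂*)‖ ≤ 5·max{ ‖s·b₁ − b₂·κ(s)‖ , ‖κ(s)·b₁* − b₂*·s‖ }. -/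
/-!
Write `x ⊕ y := r₁ x r₁* + r₂ y r₂*` for the Cuntz sum and, for an isometry `x`,
`u x := (1 ⊕ x) x* + r₂ (1 - x x*)`. The element of the statement is `u s`, each `u x` is unitary,
and `κ (u s) = u (κ s)` since `κ` fixes `r₁, r₂`. For isometries `s, t`, right multiplication by
the unitary `u t` turns the distance into `‖u s · b₂ - (b₁ ⊕ b₂) · u t‖`, and this difference is a
sum of four terms, each being `s* b₂ - b₁ t*` or `s b₁ - b₂ t` multiplied by isometries on the left
and adjoints of isometries on the right. The computation uses `b₁ = b₁ ⊕ b₁`, which holds because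
`b₁` commutes with `r₁, r₂`. Hence the distance is at most `2 ‖s b₁ - b₂ t‖ + 2 ‖t b₁* - b₂* s‖`.
-/

section CuntzSum

variable {R : Type*} [Ring R] [StarRing R]

def cuntzSum (r₁ r₂ x y : R) : R := r₁ * x * star r₁ + r₂ * y * star r₂

structure IsCuntzPair (r₁ r₂ : R) : Prop where
  star_mul_self_left : star r₁ * r₁ = 1
  star_mul_self_right : star r₂ * r₂ = 1
  mul_star_add_mul_star : r₁ * star r₁ + r₂ * star r₂ = 1

variable {r₁ r₂ : R}

theorem IsCuntzPair.star_left_mul_right (h : IsCuntzPair r₁ r₂) : star r₁ * r₂ = 0 := by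
  have hdouble : star r₁ * r₂ + star r₁ * r₂ = star r₁ * r₂ := by
    calc star r₁ * r₂ + star r₁ * r₂
        = (star r₁ * r₁) * star r₁ * r₂ + star r₁ * r₂ * (star r₂ * r₂) := by
          rw [h.star_mul_self_left, h.star_mul_self_right, one_mul, mul_one]
      _ = star r₁ * (r₁ * star r₁ + r₂ * star r₂) * r₂ := by noncomm_ring
      _ = star r₁ * r₂ := by rw [h.mul_star_add_mul_star, mul_one]
  simpa using hdouble

theorem IsCuntzPair.star_right_mul_left (h : IsCuntzPair r₁ r₂) : star r₂ * r₁ = 0 := by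
  simpa using congrArg star h.star_left_mul_right

theorem star_cuntzSum (x y : R) :
    star (cuntzSum r₁ r₂ x y) = cuntzSum r₁ r₂ (star x) (star y) := by
  simp [cuntzSum, mul_assoc]

theorem IsCuntzPair.cuntzSum_one_one (h : IsCuntzPair r₁ r₂) : cuntzSum r₁ r₂ 1 1 = 1 := by
  simpa [cuntzSum] using h.mul_star_add_mul_star

theorem IsCuntzPair.cuntzSum_mul_cuntzSum (h : IsCuntzPair r₁ r₂) (x y x' y' : R) :
    cuntzSum r₁ r₂ x y * cuntzSum r₁ r₂ x' y' = cuntzSum r₁ r₂ (x * x') (y * y') := by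
  calc cuntzSum r₁ r₂ x y * cuntzSum r₁ r₂ x' y'
      = r₁ * x * (star r₁ * r₁) * x' * star r₁ + r₁ * x * (star r₁ * r₂) * y' * star r₂
        + r₂ * y * (star r₂ * r₁) * x' * star r₁ + r₂ * y * (star r₂ * r₂) * y' * star r₂ := by
        simp only [cuntzSum]; noncomm_ring
    _ = cuntzSum r₁ r₂ (x * x') (y * y') := by
        simp [cuntzSum, h.star_mul_self_left, h.star_mul_self_right, h.star_left_mul_right,
          h.star_right_mul_left, mul_assoc]

theorem IsCuntzPair.cuntzSum_mul_right (h : IsCuntzPair r₁ r₂) (x y : R) :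
    cuntzSum r₁ r₂ x y * r₂ = r₂ * y := by
  simp [cuntzSum, add_mul, mul_assoc, h.star_mul_self_right, h.star_left_mul_right]

theorem cuntzSum_sub_cuntzSum_left (x y y' : R) :
    cuntzSum r₁ r₂ x y - cuntzSum r₁ r₂ x y' = r₂ * (y - y') * star r₂ := by
  simp only [cuntzSum]; noncomm_ring

theorem cuntzSum_self_of_commute {b : R} (h : r₁ * star r₁ + r₂ * star r₂ = 1)
    (hb₁ : Commute b r₁) (hb₂ : Commute b r₂) : cuntzSum r₁ r₂ b b = b := by
  rw [cuntzSum, ← hb₁.eq, ← hb₂.eq, mul_assoc, mul_assoc, ← mul_add, h, mul_one]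

theorem map_cuntzSum {S F : Type*} [Ring S] [StarRing S] [FunLike F R S] [RingHomClass F R S]
    [StarHomClass F R S] (f : F) (x y : R) :
    f (cuntzSum r₁ r₂ x y) = cuntzSum (f r₁) (f r₂) (f x) (f y) := by
  simp [cuntzSum, map_star]

theorem IsStarProjection.mul_star_self_of_star_mul_self_eq_one {s : R} (hs : star s * s = 1) :
    IsStarProjection (s * star s) where
  isIdempotentElem := by rw [IsIdempotentElem, mul_assoc, ← mul_assoc (star s), hs, one_mul]
  isSelfAdjoint := by simp [IsSelfAdjoint]

theorem mul_star_add_mul_mem_unitary {a w s : R} (hs : star s * s = 1) (ha : star a * a = 1)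
    (hw : star w * w = 1) (haw : star a * w = w * star s)
    (hsum : a * star a + w * (1 - s * star s) * star w = 1) :
    a * star s + w * (1 - s * star s) ∈ unitary R := by
  have he := (IsStarProjection.mul_star_self_of_star_mul_self_eq_one hs).one_sub
  set e := 1 - s * star s
  have hse : star s * e = 0 := by simp [e, mul_sub, ← mul_assoc, hs]
  have hes : e * s = 0 := by simp [e, sub_mul, mul_assoc, hs]
  have hwa : star w * a = s * star w := by simpa using congrArg star haw
  have hstar : star (a * star s + w * e) = s * star a + e * star w := by
    simp [he.isSelfAdjoint.star_eq]
  rw [Unitary.mem_iff, hstar]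
  constructor
  · calc (s * star a + e * star w) * (a * star s + w * e)
        = s * (star a * a) * star s + s * (star a * w) * e + e * (star w * a) * star s
          + e * (star w * w) * e := by noncomm_ring
      _ = s * star s + e := by
        rw [ha, haw, hwa, hw]
        simp [mul_assoc, hse, ← mul_assoc e, hes, he.isIdempotentElem.eq]
      _ = 1 := by simp [e]
  · calc (a * star s + w * e) * (s * star a + e * star w)
        = a * (star s * s) * star a + a * (star s * e) * star w + w * (e * s) * star a
          + w * (e * e) * star w := by noncomm_ring
      _ = 1 := by
        rw [hs, mul_one, hse, hes, he.isIdempotentElem.eq, ← hsum]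
        simp

def cuntzUnitary (r₁ r₂ s : R) : R := cuntzSum r₁ r₂ 1 s * star s + r₂ * (1 - s * star s)

theorem map_cuntzUnitary {S F : Type*} [Ring S] [StarRing S] [FunLike F R S]
    [RingHomClass F R S] [StarHomClass F R S] (f : F) (s : R) :
    f (cuntzUnitary r₁ r₂ s) = cuntzUnitary (f r₁) (f r₂) (f s) := by
  simp [cuntzUnitary, map_cuntzSum, map_star]

theorem IsCuntzPair.cuntzUnitary_mem_unitary {s : R} (h : IsCuntzPair r₁ r₂)
    (hs : star s * s = 1) : cuntzUnitary r₁ r₂ s ∈ unitary R := by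
  refine mul_star_add_mul_mem_unitary hs ?_ h.star_mul_self_right ?_ ?_
  · rw [star_cuntzSum, h.cuntzSum_mul_cuntzSum, hs, star_one, one_mul, h.cuntzSum_one_one]
  · rw [star_cuntzSum, h.cuntzSum_mul_right]
  · rw [star_cuntzSum, h.cuntzSum_mul_cuntzSum, star_one, one_mul,
      ← cuntzSum_sub_cuntzSum_left (r₁ := r₁) 1 1, add_sub_cancel, h.cuntzSum_one_one]

theorem IsCuntzPair.cuntzUnitary_mul_sub_cuntzSum_mul (h : IsCuntzPair r₁ r₂) {b₁ : R}
    (hb₁ : Commute b₁ r₁) (hb₂ : Commute b₁ r₂) (b₂ s t : R) :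
    cuntzUnitary r₁ r₂ s * b₂ - cuntzSum r₁ r₂ b₁ b₂ * cuntzUnitary r₁ r₂ t =
      cuntzSum r₁ r₂ 1 s * (star s * b₂ - b₁ * star t)
        + r₂ * (s * b₁ - b₂ * t) * (star r₂ * star t) + r₂ * (b₂ * t - s * b₁) * star t
        + r₂ * s * (b₁ * star t - star s * b₂) := by
  have hcu : cuntzSum r₁ r₂ b₁ b₂ * cuntzUnitary r₁ r₂ t =
      cuntzSum r₁ r₂ b₁ (b₂ * t) * star t + r₂ * b₂ * (1 - t * star t) := by
    rw [cuntzUnitary, mul_add, ← mul_assoc, ← mul_assoc, h.cuntzSum_mul_cuntzSum,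
      h.cuntzSum_mul_right, mul_one]
  have hb : cuntzSum r₁ r₂ 1 s * b₁ = cuntzSum r₁ r₂ b₁ (s * b₁) := by
    conv_lhs => rw [← cuntzSum_self_of_commute h.mul_star_add_mul_star hb₁ hb₂]
    rw [h.cuntzSum_mul_cuntzSum, one_mul]
  calc cuntzUnitary r₁ r₂ s * b₂ - cuntzSum r₁ r₂ b₁ b₂ * cuntzUnitary r₁ r₂ t
      = cuntzSum r₁ r₂ 1 s * (star s * b₂) - cuntzSum r₁ r₂ b₁ (s * b₁) * star t
        + (cuntzSum r₁ r₂ b₁ (s * b₁) - cuntzSum r₁ r₂ b₁ (b₂ * t)) * star t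
        + r₂ * (b₂ * t * star t - s * star s * b₂) := by
        rw [hcu, cuntzUnitary]; noncomm_ring
    _ = _ := by rw [cuntzSum_sub_cuntzSum_left, ← hb]; noncomm_ring

end CuntzSum

section CStarRing

variable {E : Type*} [NormedRing E] [StarRing E] [CStarRing E]

theorem norm_mul_of_star_mul_self_eq_one {s : E} (hs : star s * s = 1) (a : E) :
    ‖s * a‖ = ‖a‖ := by
  rw [← sq_eq_sq₀ (norm_nonneg _) (norm_nonneg _)]
  simp [sq, ← CStarRing.norm_star_mul_self, mul_assoc, ← mul_assoc (star s), hs]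

theorem norm_mul_star_of_star_mul_self_eq_one {s : E} (hs : star s * s = 1) (a : E) :
    ‖a * star s‖ = ‖a‖ := by
  rw [← norm_star, star_mul, star_star, norm_mul_of_star_mul_self_eq_one hs, norm_star]

theorem IsCuntzPair.norm_cuntzUnitary_mul_mul_star_sub_le {r₁ r₂ : E} (h : IsCuntzPair r₁ r₂)
    {b₁ : E} (hb₁ : Commute b₁ r₁) (hb₂ : Commute b₁ r₂) (b₂ : E) {s t : E}
    (hs : star s * s = 1) (ht : star t * t = 1) :
    ‖cuntzUnitary r₁ r₂ s * b₂ * star (cuntzUnitary r₁ r₂ t) - cuntzSum r₁ r₂ b₁ b₂‖ ≤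
      2 * ‖s * b₁ - b₂ * t‖ + 2 * ‖t * star b₁ - star b₂ * s‖ := by
  have hr₂ := h.star_mul_self_right
  have hut := h.cuntzUnitary_mem_unitary ht
  have hA : star (cuntzSum r₁ r₂ 1 s) * cuntzSum r₁ r₂ 1 s = 1 := by
    rw [star_cuntzSum, h.cuntzSum_mul_cuntzSum, hs, star_one, one_mul, h.cuntzSum_one_one]
  have htr : star (t * r₂) * (t * r₂) = 1 := by
    rw [star_mul, mul_assoc, ← mul_assoc (star t), ht, one_mul, hr₂]
  have hr₂s : star (r₂ * s) * (r₂ * s) = 1 := by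
    rw [star_mul, mul_assoc, ← mul_assoc (star r₂), hr₂, one_mul, hs]
  have hdual : ‖b₁ * star t - star s * b₂‖ = ‖t * star b₁ - star b₂ * s‖ := by
    rw [← norm_star]; simp
  rw [← CStarRing.norm_mul_mem_unitary _ hut, sub_mul, mul_assoc _ (star _),
    Unitary.star_mul_self_of_mem hut, mul_one, h.cuntzUnitary_mul_sub_cuntzSum_mul hb₁ hb₂]
  refine norm_add₄_le.trans_eq ?_
  rw [norm_mul_of_star_mul_self_eq_one hA, mul_assoc, norm_mul_of_star_mul_self_eq_one hr₂,
    ← star_mul, norm_mul_star_of_star_mul_self_eq_one htr, mul_assoc r₂,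
    norm_mul_of_star_mul_self_eq_one hr₂, norm_mul_star_of_star_mul_self_eq_one ht,
    norm_mul_of_star_mul_self_eq_one hr₂s, norm_sub_rev (star s * b₂), norm_sub_rev (b₂ * t), hdual]
  ring

end CStarRing

theorem stmt_4_general {M : Type*} [CStarAlgebra M]
    (κ : M ≃⋆ₐ[ℂ] M) (b₁ b₂ s r₁ r₂ : M)
    (hs : star s * s = 1)
    (hr₁ : star r₁ * r₁ = 1) (hr₂ : star r₂ * r₂ = 1)
    (hκr₁ : κ r₁ = r₁) (hκr₂ : κ r₂ = r₂)
    (hO₂ : r₁ * star r₁ + r₂ * star r₂ = 1)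
    (hc₁ : b₁ * r₁ = r₁ * b₁) (hc₂ : b₁ * r₂ = r₂ * b₁) :
    (r₁ * star r₁ + r₂ * s * star r₂) * star s + r₂ * (1 - s * star s) ∈ unitary M ∧
      ‖((r₁ * star r₁ + r₂ * s * star r₂) * star s + r₂ * (1 - s * star s)) * b₂ *
            star (κ ((r₁ * star r₁ + r₂ * s * star r₂) * star s + r₂ * (1 - s * star s))) -
          (r₁ * b₁ * star r₁ + r₂ * b₂ * star r₂)‖ ≤
        5 * max ‖s * b₁ - b₂ * κ s‖ ‖κ s * star b₁ - star b₂ * s‖ := by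
  have h : IsCuntzPair r₁ r₂ := ⟨hr₁, hr₂, hO₂⟩
  have hu : (r₁ * star r₁ + r₂ * s * star r₂) * star s + r₂ * (1 - s * star s) =
      cuntzUnitary r₁ r₂ s := by
    simp [cuntzUnitary, cuntzSum]
  have hκs : star (κ s) * κ s = 1 := by rw [← map_star, ← map_mul, hs, map_one]
  rw [hu, map_cuntzUnitary, hκr₁, hκr₂]
  refine ⟨h.cuntzUnitary_mem_unitary hs,
    (h.norm_cuntzUnitary_mul_mul_star_sub_le hc₁ hc₂ b₂ hs hκs).trans ?_⟩
  linarith [norm_nonneg (s * b₁ - b₂ * κ s),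
    le_max_left ‖s * b₁ - b₂ * κ s‖ ‖κ s * star b₁ - star b₂ * s‖,
    le_max_right ‖s * b₁ - b₂ * κ s‖ ‖κ s * star b₁ - star b₂ * s‖]

/-- **Lemma 3.9 (the `O₂`-sum lemma), norm estimate part.** -/
theorem stmt_4 {M : Type*} [CStarAlgebra M]
    (κ : M ≃⋆ₐ[ℂ] M) (b₁ b₂ s r₁ r₂ : M)
    (hs : star s * s = 1)
    (hr₁ : star r₁ * r₁ = 1) (hr₂ : star r₂ * r₂ = 1)
    (hκr₁ : κ r₁ = r₁) (hκr₂ : κ r₂ = r₂)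
    (hO₂ : r₁ * star r₁ + r₂ * star r₂ = 1)
    (hc₁ : b₁ * r₁ = r₁ * b₁) (hc₂ : b₁ * r₂ = r₂ * b₁)
    (hc₃ : b₁ * star r₁ = star r₁ * b₁) (hc₄ : b₁ * star r₂ = star r₂ * b₁) :
    (r₁ * star r₁ + r₂ * s * star r₂) * star s + r₂ * (1 - s * star s) ∈ unitary M ∧
      ‖((r₁ * star r₁ + r₂ * s * star r₂) * star s + r₂ * (1 - s * star s)) * b₂ *
            star (κ ((r₁ * star r₁ + r₂ * s * star r₂) * star s + r₂ * (1 - s * star s))) -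
          (r₁ * b₁ * star r₁ + r₂ * b₂ * star r₂)‖ ≤
        5 * max ‖s * b₁ - b₂ * κ s‖ ‖κ s * star b₁ - star b₂ * s‖ :=
  stmt_4_general κ b₁ b₂ s r₁ r₂ hs hr₁ hr₂ hκr₁ hκr₂ hO₂ hc₁ hc₂
end

section
/- Let M be a unital C*-algebra, κ : M → M a *-automorphism, and B ⊆ M a closed two-sided ideal with κ(B) ⊆ B. Let b₁, b₂ ∈ M, let s ∈ M be an isometry, and let r₁, r₂ ∈ M be isometries with κ(r₁) = r₁, κ(r₂) = r₂ and r₁r₁* + r₂r₂* = 1, such that b₁ commutes with r₁, r₂, r₁* and r₂*. Set u := (r₁r₁* + r₂ s r₂*)·s* + r₂(1 − ss*) (a unitary in M). If s·b₁ − b₂·κ(s) ∈ B and κ(s)·b₁* − b₂*·s ∈ B, then u·b₂·κ(u)* − (r₁ b₁ r₁* + r₂ b₂ r₂*) ∈ B. -/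
/-!
Modulo `B` the hypotheses say `s b₁ ≡ b₂ κ(s)` and, because a closed two-sided ideal of a
C⋆-algebra is self-adjoint, `s* b₂ ≡ b₁ κ(s)*`. Together with `κ(s)* κ(s) = 1` and the
orthogonality `r₂* r₁ = r₁* r₂ = 0` forced by `r₁ r₁* + r₂ r₂* = 1`, these congruences reduce
`u b₂ κ(u)*` to the Cuntz sum `r₁ b₁ r₁* + r₂ b₂ r₂*` by a computation in the quotient ring `M ⧸ B`.

Self-adjointness of a closed ideal: for `a ∈ B` and `ε > 0`, the element
`a* (a a*) (ε + a a*)⁻¹ ∈ B` differs from `a*` by `ε a* (ε + a a*)⁻¹`, of norm at most `√ε`.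
-/

namespace CStarAlgebra

variable {A : Type*} [CStarAlgebra A]

lemma norm_star_mul_inv_sq_le [PartialOrder A] [StarOrderedRing A] (a : A) {ε : ℝ} (hε : 0 < ε)
    (u : Aˣ) (hu : (u : A) = algebraMap ℝ A ε + a * star a) :
    ‖star a * ↑u⁻¹‖ ^ 2 ≤ ε⁻¹ := by
  let e : Aˣ := (Units.mk0 ε hε.ne').map (algebraMap ℝ A).toMonoidHom
  have he : (0 : A) ≤ e := algebraMap_nonneg A hε.le
  have heu : (e : A) ≤ u := hu ▸ le_add_of_nonneg_right (mul_star_self_nonneg a)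
  have hinv : 0 ≤ (↑u⁻¹ : A) := CFC.inv_nonneg_of_nonneg u (he.trans heu)
  have hconj : ↑u⁻¹ * (a * star a) * ↑u⁻¹ ≤ (↑u⁻¹ : A) :=
    calc ↑u⁻¹ * (a * star a) * ↑u⁻¹ ≤ ↑u⁻¹ * (u : A) * ↑u⁻¹ :=
          hinv.isSelfAdjoint.conjugate_le_conjugate (hu ▸ le_add_of_nonneg_left he)
      _ = ↑u⁻¹ := by rw [u.inv_mul, one_mul]
  calc ‖star a * ↑u⁻¹‖ ^ 2 = ‖↑u⁻¹ * (a * star a) * ↑u⁻¹‖ := by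
        rw [sq, ← CStarRing.norm_star_mul_self, star_mul, star_star, hinv.isSelfAdjoint.star_eq,
          mul_assoc, mul_assoc, mul_assoc]
    _ ≤ ε⁻¹ := by
      rw [norm_le_iff_le_algebraMap _ (inv_nonneg.2 hε.le)
        (conjugate_nonneg_of_nonneg (mul_star_self_nonneg a) hinv)]
      exact hconj.trans (CStarAlgebra.inv_le_inv he heu)

lemma exists_mem_norm_star_sub_sq_le {B : TwoSidedIdeal A} {a : A} (ha : a ∈ B) {ε : ℝ}
    (hε : 0 < ε) : ∃ b ∈ B, ‖star a - b‖ ^ 2 ≤ ε := by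
  let := spectralOrder A
  let := spectralOrderedRing A
  obtain ⟨u, hu⟩ : IsUnit (algebraMap ℝ A ε + a * star a) :=
    isUnit_of_le _ (le_add_of_nonneg_right (mul_star_self_nonneg a))
      ((isUnit_iff_ne_zero.2 hε.ne').map _ |>.isStrictlyPositive (algebraMap_nonneg A hε.le))
  refine ⟨star a * (a * star a * ↑u⁻¹), B.mul_mem_left _ _ (B.mul_mem_right _ _
    (B.mul_mem_right _ _ ha)), ?_⟩
  have hsub : star a - star a * (a * star a * ↑u⁻¹) = ε • (star a * ↑u⁻¹) := by
    have : a * star a = u - algebraMap ℝ A ε := by rw [hu, add_sub_cancel_left]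
    rw [this, sub_mul, u.mul_inv, Algebra.algebraMap_eq_smul_one, smul_one_mul, mul_sub, mul_one,
      sub_sub_cancel, mul_smul_comm]
  calc ‖star a - star a * (a * star a * ↑u⁻¹)‖ ^ 2 = ε ^ 2 * ‖star a * ↑u⁻¹‖ ^ 2 := by
        rw [hsub, norm_smul, Real.norm_of_nonneg hε.le, mul_pow]
    _ ≤ ε ^ 2 * ε⁻¹ := by gcongr; exact norm_star_mul_inv_sq_le a hε u hu
    _ = ε := by field_simp

end CStarAlgebra

lemma TwoSidedIdeal.star_mem_of_isClosed {A : Type*} [CStarAlgebra A] {B : TwoSidedIdeal A}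
    (hB : IsClosed (B : Set A)) {a : A} (ha : a ∈ B) : star a ∈ B := by
  refine hB.closure_subset (Metric.mem_closure_iff.2 fun δ hδ => ?_)
  obtain ⟨b, hb, hab⟩ := CStarAlgebra.exists_mem_norm_star_sub_sq_le ha (pow_pos (half_pos hδ) 2)
  refine ⟨b, hb, ?_⟩
  rw [dist_eq_norm]
  linarith [(pow_le_pow_iff_left₀ (norm_nonneg _) (half_pos hδ).le two_ne_zero).1 hab]

section CuntzRelations

variable {R : Type*} [Ring R] {b₁ b₂ s s' t t' r₁ r₁' r₂ r₂' : R}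

theorem mul_eq_zero_of_mul_add_mul_eq_one (hr₁ : r₁' * r₁ = 1) (hr₂ : r₂' * r₂ = 1)
    (hO₂ : r₁ * r₁' + r₂ * r₂' = 1) : r₂' * r₁ = 0 := by
  have h : r₂' * r₁ + r₂' * r₁ = r₂' * r₁ :=
    calc r₂' * r₁ + r₂' * r₁ = r₂' * r₁ * (r₁' * r₁) + r₂' * r₂ * (r₂' * r₁) := by
          rw [hr₁, hr₂, mul_one, one_mul]
      _ = r₂' * (r₁ * r₁' + r₂ * r₂') * r₁ := by noncomm_ring
      _ = r₂' * r₁ := by rw [hO₂, mul_one]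
  exact add_eq_left.1 h

theorem cuntzSum_conj_eq (ht : t' * t = 1) (hr₁ : r₁' * r₁ = 1) (hr₂ : r₂' * r₂ = 1)
    (hO₂ : r₁ * r₁' + r₂ * r₂' = 1) (hc₁ : b₁ * r₁' = r₁' * b₁) (hc₂ : b₁ * r₂' = r₂' * b₁)
    (hm : s * b₁ = b₂ * t) (hn : s' * b₂ = b₁ * t') :
    ((r₁ * r₁' + r₂ * s * r₂') * s' + r₂ * (1 - s * s')) * b₂ *
        (t * (r₁ * r₁' + r₂ * t' * r₂') + (1 - t * t') * r₂') =
      r₁ * b₁ * r₁' + r₂ * b₂ * r₂' := by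
  set q := r₁ * r₁' + r₂ * t' * r₂' with hq_def
  have h₂₁ : r₂' * r₁ = 0 := mul_eq_zero_of_mul_add_mul_eq_one hr₁ hr₂ hO₂
  have h₁₂ : r₁' * r₂ = 0 := mul_eq_zero_of_mul_add_mul_eq_one hr₂ hr₁ (by rwa [add_comm])
  have hub₂ : ((r₁ * r₁' + r₂ * s * r₂') * s' + r₂ * (1 - s * s')) * b₂ =
      (r₁ * r₁' + r₂ * s * r₂' - r₂ * s) * b₁ * t' + r₂ * b₂ := by
    calc _ = (r₁ * r₁' + r₂ * s * r₂' - r₂ * s) * (s' * b₂) + r₂ * b₂ := by noncomm_ring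
      _ = _ := by rw [hn]; noncomm_ring
  have htv : t' * (t * q + (1 - t * t') * r₂') = q := by
    calc _ = t' * t * q + (t' - t' * t * t') * r₂' := by noncomm_ring
      _ = q := by rw [ht]; noncomm_ring
  have hb₂v : b₂ * (t * q + (1 - t * t') * r₂') = s * b₁ * q + (b₂ - s * b₁ * t') * r₂' := by
    calc _ = b₂ * t * q + (b₂ - b₂ * t * t') * r₂' := by noncomm_ring
      _ = _ := by rw [← hm]
  have hq : (r₁ * r₁' + r₂ * s * r₂') * b₁ * q = r₁ * b₁ * r₁' + r₂ * s * b₁ * t' * r₂' := by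
    calc _ = (r₁ * (r₁' * b₁) + r₂ * s * (r₂' * b₁)) * q := by noncomm_ring
      _ = r₁ * b₁ * (r₁' * r₁) * r₁' + r₁ * b₁ * (r₁' * r₂) * t' * r₂' +
          r₂ * s * b₁ * (r₂' * r₁) * r₁' + r₂ * s * b₁ * (r₂' * r₂) * t' * r₂' := by
        rw [← hc₁, ← hc₂, hq_def]; noncomm_ring
      _ = _ := by rw [hr₁, hr₂, h₁₂, h₂₁]; noncomm_ring
  calc _ = (r₁ * r₁' + r₂ * s * r₂' - r₂ * s) * b₁ * (t' * (t * q + (1 - t * t') * r₂')) +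
        r₂ * (b₂ * (t * q + (1 - t * t') * r₂')) := by rw [hub₂]; noncomm_ring
    _ = (r₁ * r₁' + r₂ * s * r₂') * b₁ * q + r₂ * (b₂ - s * b₁ * t') * r₂' := by
        rw [htv, hb₂v]; noncomm_ring
    _ = _ := by rw [hq]; noncomm_ring

theorem cuntzSum_conj_sub_mem (I : TwoSidedIdeal R) (ht : t' * t = 1) (hr₁ : r₁' * r₁ = 1)
    (hr₂ : r₂' * r₂ = 1) (hO₂ : r₁ * r₁' + r₂ * r₂' = 1) (hc₁ : b₁ * r₁' = r₁' * b₁)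
    (hc₂ : b₁ * r₂' = r₂' * b₁) (hm : s * b₁ - b₂ * t ∈ I) (hn : s' * b₂ - b₁ * t' ∈ I) :
    ((r₁ * r₁' + r₂ * s * r₂') * s' + r₂ * (1 - s * s')) * b₂ *
        (t * (r₁ * r₁' + r₂ * t' * r₂') + (1 - t * t') * r₂') -
      (r₁ * b₁ * r₁' + r₂ * b₂ * r₂') ∈ I := by
  set π := I.ringCon.mk'
  rw [← I.ker_ringCon_mk', TwoSidedIdeal.mem_ker, map_sub, sub_eq_zero] at hm hn ⊢
  have map_eq {x y : R} (h : x = y) : π x = π y := congrArg π h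
  simp only [map_mul, map_add, map_sub, map_one] at hm hn map_eq ⊢
  exact cuntzSum_conj_eq (map_eq ht) (map_eq hr₁) (map_eq hr₂) (map_eq hO₂) (map_eq hc₁)
    (map_eq hc₂) hm hn

end CuntzRelations

theorem stmt_5_general {M : Type*} [CStarAlgebra M]
    (κ : M ≃⋆ₐ[ℂ] M) (B : TwoSidedIdeal M) (hB : IsClosed (B : Set M))
    (b₁ b₂ s r₁ r₂ : M)
    (hs : star s * s = 1)
    (hr₁ : star r₁ * r₁ = 1) (hr₂ : star r₂ * r₂ = 1)
    (hκr₁ : κ r₁ = r₁) (hκr₂ : κ r₂ = r₂)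
    (hO₂ : r₁ * star r₁ + r₂ * star r₂ = 1)
    (hc₃ : b₁ * star r₁ = star r₁ * b₁) (hc₄ : b₁ * star r₂ = star r₂ * b₁)
    (hmem₁ : s * b₁ - b₂ * κ s ∈ B) (hmem₂ : κ s * star b₁ - star b₂ * s ∈ B) :
    ((r₁ * star r₁ + r₂ * s * star r₂) * star s + r₂ * (1 - s * star s)) * b₂ *
        star (κ ((r₁ * star r₁ + r₂ * s * star r₂) * star s + r₂ * (1 - s * star s))) -
      (r₁ * b₁ * star r₁ + r₂ * b₂ * star r₂) ∈ B := by
  have hκs : star (κ s) * κ s = 1 := by rw [← map_star, ← map_mul, hs, map_one]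
  have hmem₂_star : star s * b₂ - b₁ * star (κ s) ∈ B := by
    simpa [star_mul] using B.neg_mem (B.star_mem_of_isClosed hB hmem₂)
  have hκu : star (κ ((r₁ * star r₁ + r₂ * s * star r₂) * star s + r₂ * (1 - s * star s))) =
      κ s * (r₁ * star r₁ + r₂ * star (κ s) * star r₂) + (1 - κ s * star (κ s)) * star r₂ := by
    simp only [map_add, map_mul, map_sub, map_one, map_star, hκr₁, hκr₂, star_add, star_mul,
      star_sub, star_one, star_star, mul_assoc]
  rw [hκu]
  exact cuntzSum_conj_sub_mem B hκs hr₁ hr₂ hO₂ hc₃ hc₄ hmem₁ hmem₂_star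

/-- **Lemma 3.9 (the `O₂`-sum lemma), ideal membership part.** -/
theorem stmt_5 {M : Type*} [CStarAlgebra M]
    (κ : M ≃⋆ₐ[ℂ] M) (B : TwoSidedIdeal M) (hB : IsClosed (B : Set M))
    (hκB : ∀ b ∈ B, κ b ∈ B)
    (b₁ b₂ s r₁ r₂ : M)
    (hs : star s * s = 1)
    (hr₁ : star r₁ * r₁ = 1) (hr₂ : star r₂ * r₂ = 1)
    (hκr₁ : κ r₁ = r₁) (hκr₂ : κ r₂ = r₂)
    (hO₂ : r₁ * star r₁ + r₂ * star r₂ = 1)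
    (hc₁ : b₁ * r₁ = r₁ * b₁) (hc₂ : b₁ * r₂ = r₂ * b₁)
    (hc₃ : b₁ * star r₁ = star r₁ * b₁) (hc₄ : b₁ * star r₂ = star r₂ * b₁)
    (hmem₁ : s * b₁ - b₂ * κ s ∈ B) (hmem₂ : κ s * star b₁ - star b₂ * s ∈ B) :
    ((r₁ * star r₁ + r₂ * s * star r₂) * star s + r₂ * (1 - s * star s)) * b₂ *
        star (κ ((r₁ * star r₁ + r₂ * s * star r₂) * star s + r₂ * (1 - s * star s))) -
      (r₁ * b₁ * star r₁ + r₂ * b₂ * star r₂) ∈ B :=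
  stmt_5_general κ B hB b₁ b₂ s r₁ r₂ hs hr₁ hr₂ hκr₁ hκr₂ hO₂ hc₃ hc₄ hmem₁ hmem₂
end

section
/- Let M be a unital C*-algebra, let r₁, r₂ ∈ M be isometries with r₁r₁* + r₂r₂* = 1, and let u ∈ U(M). For t ∈ [0,1] define w_t := (1−t)·1 + t·(r₁ u r₁* + r₂ u* r₂*) + (t(1−t))^{1/2}·( r₂(u* − 1)r₁* − r₁(u − 1)r₂* ). Then w_t is a unitary in M for every t ∈ [0,1], the map t ↦ w_t is norm-continuous, w₀ = 1 and w₁ = r₁ u r₁* + r₂ u* r₂*. Moreover, if B ⊆ M is a two-sided ideal and u − 1 ∈ B, then w_t − 1 ∈ B for every t ∈ [0,1]. -/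
/-!
Put `a = r₁ u r₁* + r₂ u* r₂*` and `c = r₂ (u* - 1) r₁* - r₁ (u - 1) r₂*`, so that
`w t = (1 - t) + t a + √(t (1 - t)) c`. Whenever `a` is unitary, `c* = -c`, `a c = c a*` and
`c² = a + a* - 2`, expanding `w t * w t*` and `w t* * w t` gives `1` for `t ∈ [0, 1]`. These
relations are immediate for the matrices `diag(u, u*)` and `[[0, 1 - u], [u* - 1, 0]]` in `M₂(M)`,
and the Cuntz relations make `X ↦ ∑ rᵢ Xᵢⱼ rⱼ*` a unital *-homomorphism `M₂(M) → M` carrying these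
matrices to `a` and `c`. The same homomorphism maps `M₂(B)` into `B`, which gives `w t - 1 ∈ B`.
-/

open Matrix

section RotationPath

variable {A : Type*} [Ring A] [Algebra ℝ A]

noncomputable def rotationPath (a c : A) (t : ℝ) : A :=
  (1 - t) • 1 + t • a + √(t * (1 - t)) • c

theorem rotationPath_zero (a c : A) : rotationPath a c 0 = 1 := by
  simp [rotationPath]

theorem rotationPath_one (a c : A) : rotationPath a c 1 = a := by
  simp [rotationPath]

theorem map_rotationPath {B F : Type*} [Ring B] [Algebra ℝ B] [FunLike F A B]
    [AlgHomClass F ℝ A B] (f : F) (a c : A) (t : ℝ) :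
    f (rotationPath a c t) = rotationPath (f a) (f c) t := by
  simp only [rotationPath, map_add, map_smul, map_one]

theorem star_rotationPath [StarRing A] [StarModule ℝ A] (a c : A) (t : ℝ) :
    star (rotationPath a c t) = rotationPath (star a) (star c) t := by
  simp [rotationPath]

theorem rotationPath_mul_rotationPath_neg {a b c : A} (hab : a * b = 1) (hac : a * c = c * b)
    (hcc : c * c = a + b - 2) {t : ℝ} (ht : t ∈ Set.Icc (0 : ℝ) 1) :
    rotationPath a c t * rotationPath b (-c) t = 1 := by
  have hs : √(t * (1 - t)) * √(t * (1 - t)) = t * (1 - t) :=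
    Real.mul_self_sqrt (mul_nonneg ht.1 (sub_nonneg.2 ht.2))
  have two : (2 : A) = (2 : ℝ) • 1 := by rw [two_smul, one_add_one_eq_two]
  simp only [rotationPath, smul_neg, add_mul, mul_add, mul_neg, smul_mul_smul_comm,
    one_mul, mul_one, hab, hac, hcc, hs, two]
  module

theorem rotationPath_mem_unitary [StarRing A] [StarModule ℝ A] {a c : A} (ha : a ∈ unitary A)
    (hc : star c = -c) (hac : a * c = c * star a) (hcc : c * c = a + star a - 2)
    {t : ℝ} (ht : t ∈ Set.Icc (0 : ℝ) 1) : rotationPath a c t ∈ unitary A := by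
  have hca : star a * c = c * a := by
    calc star a * c = star a * (c * star a) * a := by
          rw [mul_assoc, mul_assoc, Unitary.star_mul_self_of_mem ha, mul_one]
      _ = c * a := by rw [← hac, ← mul_assoc, Unitary.star_mul_self_of_mem ha, one_mul]
  rw [Unitary.mem_iff, star_rotationPath, hc]
  constructor
  · have h := rotationPath_mul_rotationPath_neg (c := -c) (Unitary.star_mul_self_of_mem ha)
      (by rw [mul_neg, neg_mul, hca]) (by rw [neg_mul_neg, hcc, add_comm]) ht
    rwa [neg_neg] at h
  · exact rotationPath_mul_rotationPath_neg (Unitary.mul_star_self_of_mem ha) hac hcc ht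

theorem rotationPath_sub_one_mem (I : TwoSidedIdeal A) {a c : A} (ha : a - 1 ∈ I) (hc : c ∈ I)
    (t : ℝ) : rotationPath a c t - 1 ∈ I := by
  have smul_mem : ∀ (r : ℝ) {x : A}, x ∈ I → r • x ∈ I := fun r x hx =>
    I.mem_asIdeal.1 (I.asIdeal.smul_of_tower_mem r (I.mem_asIdeal.2 hx))
  have : rotationPath a c t - 1 = t • (a - 1) + √(t * (1 - t)) • c := by
    unfold rotationPath
    module
  rw [this]
  exact I.add_mem (smul_mem _ ha) (smul_mem _ hc)

end RotationPath

theorem continuous_rotationPath {A : Type*} [NormedRing A] [NormedAlgebra ℝ A] (a c : A) :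
    Continuous (rotationPath a c) := by
  unfold rotationPath
  fun_prop

section FinTwo

variable {R : Type*} [Ring R] [StarRing R]

theorem Matrix.star_fin_two (a b c d : R) :
    star !![a, b; c, d] = !![star a, star c; star b, star d] := by
  ext i j
  fin_cases i <;> fin_cases j <;> rfl

variable [Algebra ℝ R] {u : R}

theorem rotationPath_fin_two_mem_unitary [StarModule ℝ R] (hu : u ∈ unitary R) {t : ℝ}
    (ht : t ∈ Set.Icc (0 : ℝ) 1) :
    rotationPath !![u, 0; 0, star u] !![0, -(u - 1); star u - 1, 0] t ∈
      unitary (Matrix (Fin 2) (Fin 2) R) := by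
  have hu₁ := Unitary.star_mul_self_of_mem hu
  have hu₂ := Unitary.mul_star_self_of_mem hu
  refine rotationPath_mem_unitary ?_ ?_ ?_ ?_ ht
  · rw [Unitary.mem_iff, Matrix.star_fin_two, mul_fin_two, mul_fin_two, one_fin_two]
    simp [hu₁, hu₂]
  · simp [Matrix.star_fin_two]
  · rw [Matrix.star_fin_two, mul_fin_two, mul_fin_two]
    simp [mul_sub, sub_mul]
  · have h₁ : (1 - u) * (star u - 1) = u + star u - 2 := by
      simp only [sub_mul, mul_sub, one_mul, mul_one, hu₂, ← one_add_one_eq_two]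
      abel
    have h₂ : (star u - 1) * (1 - u) = star u + u - 2 := by
      simp only [sub_mul, mul_sub, one_mul, mul_one, hu₁, ← one_add_one_eq_two]
      abel
    rw [Matrix.star_fin_two, mul_fin_two, ofNat_fin_two]
    simp [h₁, h₂]

theorem rotationPath_fin_two_sub_one_mem_matrix (I : TwoSidedIdeal R) (hu : u ∈ unitary R)
    (hI : u - 1 ∈ I) (t : ℝ) :
    rotationPath !![u, 0; 0, star u] !![0, -(u - 1); star u - 1, 0] t - 1 ∈ I.matrix (Fin 2) := by
  have hI_star : star u - 1 ∈ I := by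
    have : star u - 1 = -(star u * (u - 1)) := by
      rw [mul_sub, Unitary.star_mul_self_of_mem hu, mul_one, neg_sub]
    rw [this]
    exact I.neg_mem (I.mul_mem_left _ _ hI)
  refine rotationPath_sub_one_mem _ ?_ ?_ t <;> rw [TwoSidedIdeal.mem_matrix]
  · intro i j
    fin_cases i <;> fin_cases j <;> simp [hI, hI_star]
  · intro i j
    have hI_neg : 1 - u ∈ I := neg_sub u 1 ▸ I.neg_mem hI
    fin_cases i <;> fin_cases j <;> simp [hI_star, hI_neg]

end FinTwo

section CuntzPair

variable {R : Type*} [Ring R] [StarRing R] {r₁ r₂ : R}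

structure IsCuntzPair_s13 (r₁ r₂ : R) : Prop where
  star_mul_self₁ : star r₁ * r₁ = 1
  star_mul_self₂ : star r₂ * r₂ = 1
  mul_star_add_mul_star : r₁ * star r₁ + r₂ * star r₂ = 1

namespace IsCuntzPair_s13

theorem star₁_mul₂ (h : IsCuntzPair_s13 r₁ r₂) : star r₁ * r₂ = 0 := by
  have : star r₁ * r₂ = star r₁ * r₂ + star r₁ * r₂ :=
    calc star r₁ * r₂ = star r₁ * (r₁ * star r₁ + r₂ * star r₂) * r₂ := by
          rw [h.mul_star_add_mul_star, mul_one]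
      _ = star r₁ * r₂ + star r₁ * r₂ := by
          simp only [mul_add, add_mul, mul_assoc, h.star_mul_self₂, mul_one]
          rw [← mul_assoc, h.star_mul_self₁, one_mul]
  simpa using this

theorem star₂_mul₁ (h : IsCuntzPair_s13 r₁ r₂) : star r₂ * r₁ = 0 := by
  simpa using congrArg star h.star₁_mul₂

variable (S : Type*) [CommSemiring S] [Algebra S R]

def matrixStarAlgHom (h : IsCuntzPair_s13 r₁ r₂) : Matrix (Fin 2) (Fin 2) R →⋆ₐ[S] R where
  toFun X := r₁ * X 0 0 * star r₁ + r₁ * X 0 1 * star r₂ + r₂ * X 1 0 * star r₁ +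
    r₂ * X 1 1 * star r₂
  map_one' := by simpa using h.mul_star_add_mul_star
  map_mul' X Y := by
    have e : ∀ x : R, star r₁ * (r₁ * x) = x ∧ star r₂ * (r₂ * x) = x ∧
        star r₁ * (r₂ * x) = 0 ∧ star r₂ * (r₁ * x) = 0 := fun x => by
      simp only [← mul_assoc, h.star_mul_self₁, h.star_mul_self₂, h.star₁_mul₂, h.star₂_mul₁,
        one_mul, zero_mul, and_self]
    simp only [mul_apply, Fin.sum_univ_two, add_mul, mul_add, mul_assoc, e, mul_zero, add_zero,
      zero_add]
    abel
  map_zero' := by simp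
  map_add' X Y := by
    simp only [Matrix.add_apply, mul_add, add_mul]
    abel
  commutes' s := by
    simp only [algebraMap_matrix_apply, Fin.isValue, ↓reduceIte, zero_ne_one, one_ne_zero,
      mul_zero, zero_mul, add_zero, mul_assoc, Algebra.commutes]
    rw [← mul_assoc, ← mul_assoc, ← add_mul, h.mul_star_add_mul_star, one_mul]
  map_star' X := by
    simp only [star_add, star_mul, star_star, mul_assoc, star_apply]
    abel

theorem matrixStarAlgHom_apply (h : IsCuntzPair_s13 r₁ r₂) (X : Matrix (Fin 2) (Fin 2) R) :
    h.matrixStarAlgHom S X = r₁ * X 0 0 * star r₁ + r₁ * X 0 1 * star r₂ +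
      r₂ * X 1 0 * star r₁ + r₂ * X 1 1 * star r₂ :=
  rfl

theorem matrixStarAlgHom_mem (h : IsCuntzPair_s13 r₁ r₂) (I : TwoSidedIdeal R)
    {X : Matrix (Fin 2) (Fin 2) R} (hX : X ∈ I.matrix (Fin 2)) : h.matrixStarAlgHom S X ∈ I := by
  rw [TwoSidedIdeal.mem_matrix] at hX
  have mem : ∀ a b i j, a * X i j * b ∈ I := fun a b i j =>
    I.mul_mem_right _ _ (I.mul_mem_left _ _ (hX i j))
  exact I.add_mem (I.add_mem (I.add_mem (mem _ _ _ _) (mem _ _ _ _)) (mem _ _ _ _)) (mem _ _ _ _)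

end IsCuntzPair_s13

end CuntzPair

/-- **(Footnote to Proposition 1.11.)** The rotation path connecting the Cuntz
sum `u ⊕ u*` of a unitary with its adjoint to the unit: the explicit path
`w t = (1−t)·1 + t·(r₁ u r₁* + r₂ u* r₂*) + √(t(1−t))·(r₂(u*−1)r₁* − r₁(u−1)r₂*)`
consists of unitaries, is norm-continuous, runs from `1` to `u ⊕ u*`, and stays
in `1 + B` whenever `u ∈ 1 + B`. -/
theorem stmt_13 {M : Type*} [CStarAlgebra M]
    (r₁ r₂ : M) (hr₁ : star r₁ * r₁ = 1) (hr₂ : star r₂ * r₂ = 1)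
    (hO₂ : r₁ * star r₁ + r₂ * star r₂ = 1)
    (u : M) (hu : u ∈ unitary M)
    (w : ℝ → M)
    (hw : ∀ t : ℝ, w t =
      (1 - t) • (1 : M) + t • (r₁ * u * star r₁ + r₂ * star u * star r₂) +
        Real.sqrt (t * (1 - t)) •
          (r₂ * (star u - 1) * star r₁ - r₁ * (u - 1) * star r₂)) :
    (∀ t ∈ Set.Icc (0 : ℝ) 1, w t ∈ unitary M) ∧
      ContinuousOn w (Set.Icc (0 : ℝ) 1) ∧
      w 0 = 1 ∧
      w 1 = r₁ * u * star r₁ + r₂ * star u * star r₂ ∧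
      ∀ B : TwoSidedIdeal M, u - 1 ∈ B → ∀ t ∈ Set.Icc (0 : ℝ) 1, w t - 1 ∈ B := by
  have hr : IsCuntzPair_s13 r₁ r₂ := ⟨hr₁, hr₂, hO₂⟩
  have hw' : w = rotationPath (r₁ * u * star r₁ + r₂ * star u * star r₂)
      (r₂ * (star u - 1) * star r₁ - r₁ * (u - 1) * star r₂) := funext hw
  set φ := hr.matrixStarAlgHom ℝ
  have hφa : φ !![u, 0; 0, star u] = r₁ * u * star r₁ + r₂ * star u * star r₂ := by
    simp [φ, IsCuntzPair_s13.matrixStarAlgHom_apply]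
  have hφc : φ !![0, -(u - 1); star u - 1, 0] =
      r₂ * (star u - 1) * star r₁ - r₁ * (u - 1) * star r₂ := by
    simp only [φ, IsCuntzPair_s13.matrixStarAlgHom_apply, of_apply, cons_val', cons_val_zero,
      cons_val_one, mul_zero, zero_mul, zero_add, add_zero, mul_neg, neg_mul]
    abel
  have hwφ : ∀ t, w t = φ (rotationPath !![u, 0; 0, star u] !![0, -(u - 1); star u - 1, 0] t) :=
    fun t => by rw [hw', map_rotationPath, hφa, hφc]
  refine ⟨fun t ht => ?_, hw' ▸ (continuous_rotationPath _ _).continuousOn,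
    hw' ▸ rotationPath_zero _ _, hw' ▸ rotationPath_one _ _, fun B hB t _ => ?_⟩
  · rw [hwφ]
    exact Unitary.map_mem _ (rotationPath_fin_two_mem_unitary hu ht)
  · have h := hr.matrixStarAlgHom_mem ℝ B (rotationPath_fin_two_sub_one_mem_matrix B hu hB t)
    rwa [map_sub, map_one, ← hwφ] at h
end
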